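/- arXiv:math/0603667 — 5 statements merged into one kernel-verified Lean document; each statement's English description precedes it below -/
import Mathlib

section
/- Let G be a connected simple graph and I ⊆ V(G) a pre-cycle core of G. Then for every vertex s of G there exists a unique vertex x_s ∈ I such that some path in G from s to x_s contains no vertex of I other than x_s. Moreover, setting J_x = {s ∈ V(G) : x_s = x} for x ∈ I, the sets J_x are pairwise disjoint, V(G) = ⋃_{x∈I} J_x, J_x ∩ I = {x}, each induced subgraph G|_{J_x} is a tree, and every edge of G joins either two vertices of I or two vertices of a single set J_x. -/
namespace CoxPerp

/-! ### Graph-theoretic preliminaries -/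

variable {V : Type*}

/-- The subgraph of `G` induced on `I` (padded with isolated vertices). -/
def Restrict (G : SimpleGraph V) (I : Set V) : SimpleGraph V where
  Adj u v := u ∈ I ∧ v ∈ I ∧ G.Adj u v
  symm := ⟨fun u v ⟨hu, hv, h⟩ => ⟨hv, hu, h.symm⟩⟩
  loopless := ⟨fun u ⟨_, _, h⟩ => G.loopless.irrefl u h⟩

/-- The induced subgraph `G|_I` is connected (in particular nonempty). -/
def ConnectedOn (G : SimpleGraph V) (I : Set V) : Prop :=
  I.Nonempty ∧ ∀ u ∈ I, ∀ v ∈ I, (Restrict G I).Reachable u v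

/-- `C` is the vertex set of a cycle of `G` in the sense of the paper: a closed path
`x_0, …, x_{n-1}, x_0` with no repeated vertices and no chords. -/
def IsInducedCycle (G : SimpleGraph V) (C : Set V) : Prop :=
  ∃ (n : ℕ) (f : ZMod n → V), 3 ≤ n ∧ Function.Injective f ∧ Set.range f = C ∧
    (∀ i, G.Adj (f i) (f (i + 1))) ∧
    ∀ i j, G.Adj (f i) (f j) → j = i + 1 ∨ i = j + 1

/-- `G` contains a cycle. -/
def HasCycle (G : SimpleGraph V) : Prop := ∃ C, IsInducedCycle G C

/-- `G` contains no cycle. -/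
def Acyclic (G : SimpleGraph V) : Prop := ¬HasCycle G

/-- `I` is a pre-cycle core of `G`: `G|_I` is connected and contains every cycle of `G`. -/
def IsPreCycleCore (G : SimpleGraph V) (I : Set V) : Prop :=
  ConnectedOn G I ∧ ∀ C, IsInducedCycle G C → C ⊆ I

/-- `K` is the cycle core of `G`: the unique minimal pre-cycle core. -/
def IsCycleCore (G : SimpleGraph V) (K : Set V) : Prop :=
  IsPreCycleCore G K ∧ ∀ I, IsPreCycleCore G I → K ⊆ I

/-- A walk is non-backtracking if no step immediately retraces the previous edge. -/
def IsNonBacktracking {G : SimpleGraph V} {u v : V} (w : G.Walk u v) : Prop :=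
  w.darts.Chain' fun d d' => d'.toProd.2 ≠ d.toProd.1

/-! ### Coxeter-theoretic preliminaries -/

variable {B W : Type*} [Group W] {M : CoxeterMatrix B}

/-- `m cs s t` is the order of `s t` in `W` (with the value `0` standing for infinite order). -/
noncomputable def m (cs : CoxeterSystem M W) (s t : B) : ℕ :=
  orderOf (cs.simple s * cs.simple t)

lemma orderOf_conj' {G : Type*} [Group G] (g x : G) : orderOf (g * x * g⁻¹) = orderOf x :=
  orderOf_injective (MulAut.conj g).toMonoidHom (MulAut.conj g).injective x

lemma m_symm (cs : CoxeterSystem M W) (s t : B) : m cs s t = m cs t s := by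
  unfold m
  have h : cs.simple t * cs.simple s
      = cs.simple t * (cs.simple s * cs.simple t) * (cs.simple t)⁻¹ := by group
  rw [h, orderOf_conj']

/-- `m(s,t)` is even (in particular finite). -/
def EvenM (cs : CoxeterSystem M W) (s t : B) : Prop :=
  m cs s t ≠ 0 ∧ Even (m cs s t)

/-- The standard parabolic subgroup `W_I`. -/
def parabolic (cs : CoxeterSystem M W) (I : Set B) : Subgroup W :=
  Subgroup.closure (cs.simple '' I)

/-- `r` is a reflection of the standard parabolic subgroup `W_I`,
i.e. a `W_I`-conjugate of a simple reflection indexed by `I`. -/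
def IsReflectionOf (cs : CoxeterSystem M W) (I : Set B) (r : W) : Prop :=
  ∃ w ∈ parabolic cs I, ∃ s ∈ I, r = w * cs.simple s * w⁻¹

/-- The subgroup `W_I^{⊥x}`, generated by the reflections of `W_I` other than `x` that
commute with `x`. -/
def perp (cs : CoxeterSystem M W) (I : Set B) (x : B) : Subgroup W :=
  Subgroup.closure {r | IsReflectionOf cs I r ∧ r ≠ cs.simple x ∧
    r * cs.simple x = cs.simple x * r}

/-- The odd Coxeter graph `Γ_I^odd`: vertices are the elements of `I`, and distinct
`s, t ∈ I` are adjacent iff `m(s,t)` is odd. -/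
def oddGraph (cs : CoxeterSystem M W) (I : Set B) : SimpleGraph B where
  Adj s t := s ≠ t ∧ s ∈ I ∧ t ∈ I ∧ Odd (m cs s t)
  symm := ⟨fun s t ⟨h1, h2, h3, h4⟩ => ⟨h1.symm, h3, h2, m_symm cs s t ▸ h4⟩⟩
  loopless := ⟨fun s h => h.1 rfl⟩

/-- `I_{∼x}^odd` : the vertex set of the connected component of `Γ_I^odd` containing `x`. -/
def oddComponent (cs : CoxeterSystem M W) (I : Set B) (x : B) : Set B :=
  {y | (oddGraph cs I).Reachable x y}

/-- The Coxeter graph of `K` is of type `Ã_{n-1}`: `K` admits a cyclic ordering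
`y_0, …, y_{n-1}` with `m(y_i, y_{i+1}) = 3` and `m(y_i, y_j) = 2` for all other
pairs of distinct indices. -/
def IsTypeATilde (cs : CoxeterSystem M W) (K : Set B) (n : ℕ) : Prop :=
  ∃ f : ZMod n → B, Function.Injective f ∧ Set.range f = K ∧
    (∀ i, m cs (f i) (f (i + 1)) = 3) ∧
    ∀ i j : ZMod n, j ≠ i → j ≠ i + 1 → i ≠ j + 1 → m cs (f i) (f j) = 2

/-- The Coxeter graph `Γ`: distinct `s, t` are adjacent iff `m(s,t) ≥ 3` (possibly infinite). -/
def coxGraph (cs : CoxeterSystem M W) : SimpleGraph B where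
  Adj s t := s ≠ t ∧ (m cs s t = 0 ∨ 3 ≤ m cs s t)
  symm := ⟨fun s t ⟨h1, h2⟩ => ⟨h1.symm, m_symm cs s t ▸ h2⟩⟩
  loopless := ⟨fun s h => h.1 rfl⟩

end CoxPerp

/-!
A cycle of `G` in Mathlib's sense may have chords, but each chord splits it into two shorter
cycles covering its vertices, so by induction every vertex of every cycle lies on a chordless
cycle, hence in `I`. Consequently, if `a ∉ I` is adjacent to `y ∈ I`, then `a` cannot reach
another vertex `x ∈ I` while avoiding `y`: the edge `a — y` would close a cycle through `a`
(via a path from `x` to `y` inside the connected `G|_I`). Given walks from `s` to `x ≠ y` that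
meet `I` only at their ends, the vertex preceding `y` on the second one is such an `a`, so `x_s`
is unique; it exists because `G` is connected. The fibre of `x` is connected through the walks
to `x` and meets `I` only in `x`, so an induced cycle in it, which would lie in `I`, is
impossible.
-/
namespace CoxPerp

open SimpleGraph

variable {V : Type*} {G : SimpleGraph V} {I J : Set V}

def IsCyclicPath (G : SimpleGraph V) (n : ℕ) (f : ZMod n → V) : Prop :=
  3 ≤ n ∧ Function.Injective f ∧ ∀ i, G.Adj (f i) (f (i + 1))

/-- Closing the arc `f a, f (a + 1), …, f (a + m)` by the chord between its ends. -/
theorem IsCyclicPath.arc {n : ℕ} {f : ZMod n → V} (hf : IsCyclicPath G n f) (a : ZMod n)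
    {m : ℕ} (hm : 2 ≤ m) (hmn : m < n) (hchord : G.Adj (f (a + m)) (f a)) :
    IsCyclicPath G (m + 1) (fun t : ZMod (m + 1) => f (a + t.val)) := by
  refine ⟨by omega, fun s t hst => ?_, fun t => ?_⟩
  · have hcast : ((s.val : ℕ) : ZMod n) = t.val := add_left_cancel (hf.2.1 hst)
    rw [ZMod.natCast_eq_natCast_iff', Nat.mod_eq_of_lt (by have := s.val_lt; omega),
      Nat.mod_eq_of_lt (by have := t.val_lt; omega)] at hcast
    exact ZMod.val_injective _ hcast
  · have hval : (t + 1).val = (t.val + 1) % (m + 1) := by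
      rw [ZMod.val_add, ZMod.val_one_eq_one_mod, Nat.one_mod_eq_one.mpr (by omega)]
    rcases Nat.lt_or_ge (t.val + 1) (m + 1) with ht | ht
    · dsimp only
      rw [hval, Nat.mod_eq_of_lt ht, Nat.cast_succ, ← add_assoc]
      exact hf.2.2 _
    · have htm : t.val = m := by have := t.val_lt; omega
      dsimp only
      rw [hval, htm, Nat.mod_self, Nat.cast_zero, add_zero]
      exact hchord

/-- A chord `f i — f j` splits the cycle into the two shorter cycles closed by it, which together
contain every vertex; a chordless cycle is an induced cycle. -/
theorem IsCyclicPath.apply_mem (hI : ∀ C, IsInducedCycle G C → C ⊆ I) :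
    ∀ {n : ℕ} {f : ZMod n → V}, IsCyclicPath G n f → ∀ l, f l ∈ I := by
  intro n
  induction n using Nat.strong_induction_on with
  | _ n ih =>
  intro f hf l
  by_cases hchordless : ∀ i j, G.Adj (f i) (f j) → j = i + 1 ∨ i = j + 1
  · exact hI _ ⟨n, f, hf.1, hf.2.1, rfl, hf.2.2, hchordless⟩ ⟨l, rfl⟩
  push Not at hchordless
  obtain ⟨i, j, hij, hji, hij'⟩ := hchordless
  have : NeZero n := ⟨by have := hf.1; omega⟩
  set k := (j - i).val
  have hkcast : (k : ZMod n) = j - i := ZMod.natCast_zmod_val _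
  have hkn : k < n := ZMod.val_lt _
  have hk0 : k ≠ 0 := by
    intro h0
    rw [h0, Nat.cast_zero, eq_comm, sub_eq_zero] at hkcast
    exact G.loopless.irrefl _ (hkcast ▸ hij)
  have hk1 : k ≠ 1 := by
    intro h1
    rw [h1, Nat.cast_one, eq_sub_iff_add_eq, add_comm] at hkcast
    exact hji hkcast.symm
  have hkn1 : k ≠ n - 1 := by
    intro h1
    rw [h1, Nat.cast_sub (by omega), ZMod.natCast_self, Nat.cast_one, zero_sub,
      eq_sub_iff_add_eq, neg_add_eq_iff_eq_add] at hkcast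
    exact hij' (hkcast.trans (add_comm _ _))
  set d := (l - i).val
  have hdcast : (d : ZMod n) = l - i := ZMod.natCast_zmod_val _
  rcases le_or_gt d k with hdk | hkd
  · have hchord : G.Adj (f (i + k)) (f i) := by
      rw [hkcast, add_sub_cancel]
      exact hij.symm
    have := ih (k + 1) (by omega) (hf.arc i (by omega) hkn hchord) (d : ZMod (k + 1))
    rwa [ZMod.val_cast_of_lt (by omega), hdcast, add_sub_cancel] at this
  · have hchord : G.Adj (f (j + ((n - k : ℕ) : ZMod n))) (f j) := by
      rwa [Nat.cast_sub hkn.le, ZMod.natCast_self, zero_sub, hkcast, neg_sub,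
        add_sub_cancel]
    have := ih (n - k + 1) (by omega) (hf.arc j (by omega) (by omega) hchord)
      ((d - k : ℕ) : ZMod (n - k + 1))
    rwa [ZMod.val_cast_of_lt (by have := ZMod.val_lt (l - i); omega), Nat.cast_sub hkd.le,
      hdcast, hkcast, sub_sub_sub_cancel_right, add_sub_cancel] at this

theorem _root_.SimpleGraph.Walk.IsCycle.isCyclicPath {u : V} {c : G.Walk u u}
    (hc : c.IsCycle) : IsCyclicPath G c.length (fun t => c.getVert t.val) := by
  have h3 := hc.three_le_length
  have : NeZero c.length := ⟨by omega⟩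
  refine ⟨h3, fun s t hst => ZMod.val_injective _ ?_, fun t => ?_⟩
  · exact hc.getVert_injOn' (by have := s.val_lt; simp only [Set.mem_ofPred_eq]; omega)
      (by have := t.val_lt; simp only [Set.mem_ofPred_eq]; omega) hst
  · have hsucc : c.getVert (t + 1).val = c.getVert (t.val + 1) := by
      rw [ZMod.val_add, ZMod.val_one_eq_one_mod, Nat.one_mod_eq_one.mpr (by omega)]
      rcases Nat.lt_or_ge (t.val + 1) c.length with ht | ht
      · rw [Nat.mod_eq_of_lt ht]
      · have htl : t.val + 1 = c.length := by have := t.val_lt; omega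
        rw [htl, Nat.mod_self, Walk.getVert_zero, Walk.getVert_length]
    dsimp only
    rw [hsucc]
    exact c.adj_getVert_succ t.val_lt

theorem _root_.SimpleGraph.Walk.IsCycle.support_subset (hI : ∀ C, IsInducedCycle G C → C ⊆ I)
    {u : V} {c : G.Walk u u} (hc : c.IsCycle) : ∀ v ∈ c.support, v ∈ I := by
  intro v hv
  obtain ⟨k, rfl, hk⟩ := Walk.mem_support_iff_exists_getVert.mp hv
  have : NeZero c.length := ⟨by have := hc.three_le_length; omega⟩
  have hmod : c.getVert (k % c.length) = c.getVert k := by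
    rcases hk.lt_or_eq with hk | rfl
    · rw [Nat.mod_eq_of_lt hk]
    · rw [Nat.mod_self, Walk.getVert_zero, Walk.getVert_length]
  have := hc.isCyclicPath.apply_mem hI (k : ZMod c.length)
  rwa [ZMod.val_natCast, hmod] at this

theorem exists_walk_of_restrict_walk :
    ∀ {x y : V}, (Restrict G J).Walk x y → x ∈ J → ∃ p : G.Walk x y, ∀ v ∈ p.support, v ∈ J
  | _, _, .nil, hx => ⟨.nil, by simpa⟩
  | _, _, .cons h q, hx =>
    let ⟨p, hp⟩ := exists_walk_of_restrict_walk q h.2.1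
    ⟨.cons h.2.2 p, by simpa [hx] using hp⟩

theorem reachable_restrict_of_walk :
    ∀ {x y : V} (p : G.Walk x y), (∀ v ∈ p.support, v ∈ J) → (Restrict G J).Reachable x y
  | _, _, .nil, _ => .rfl
  | _, _, .cons h p, hp =>
    have hp' : ∀ v ∈ p.support, v ∈ J := fun v hv => hp v (by simp [hv])
    have hadj : (Restrict G J).Adj _ _ := ⟨hp _ (by simp), hp' _ p.start_mem_support, h⟩
    hadj.reachable.trans (reachable_restrict_of_walk p hp')

theorem connectedOn_of_forall_walk {x : V} (hx : x ∈ J)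
    (h : ∀ u ∈ J, ∃ p : G.Walk u x, ∀ v ∈ p.support, v ∈ J) : ConnectedOn G J := by
  have hreach : ∀ u ∈ J, (Restrict G J).Reachable u x := fun u hu =>
    let ⟨p, hp⟩ := h u hu
    reachable_restrict_of_walk p hp
  exact ⟨⟨x, hx⟩, fun u hu v hv => (hreach u hu).trans (hreach v hv).symm⟩

theorem IsInducedCycle.of_restrict {C : Set V} (hC : IsInducedCycle (Restrict G J) C) :
    IsInducedCycle G C ∧ C ⊆ J := by
  obtain ⟨n, f, hn, hinj, rfl, hadj, hchord⟩ := hC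
  refine ⟨⟨n, f, hn, hinj, rfl, fun i => (hadj i).2.2,
    fun i j hij => hchord i j ⟨(hadj i).1, (hadj j).1, hij⟩⟩, ?_⟩
  rintro _ ⟨i, rfl⟩
  exact (hadj i).1

theorem IsInducedCycle.nontrivial {C : Set V} (hC : IsInducedCycle G C) : C.Nontrivial := by
  obtain ⟨n, f, hn, hinj, rfl, -, -⟩ := hC
  have : Fact (1 < n) := ⟨by omega⟩
  exact ⟨f 0, ⟨0, rfl⟩, f 1, ⟨1, rfl⟩, hinj.ne zero_ne_one⟩

theorem acyclic_restrict_of_subsingleton_inter (hI : ∀ C, IsInducedCycle G C → C ⊆ I)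
    (hJ : (J ∩ I).Subsingleton) : Acyclic (Restrict G J) := by
  rintro ⟨C, hC⟩
  obtain ⟨hCG, hCJ⟩ := hC.of_restrict
  exact hCG.nontrivial.not_subsingleton (hJ.anti (Set.subset_inter hCJ (hI C hCG)))

/-- The edge `a — y`, a walk from `a` to `x` and a walk from `x` to `y` inside `I` would give a
cycle through `a ∉ I`. -/
theorem not_adj_of_walk_to_core (hI : IsPreCycleCore G I) {a x y : V} (ha : a ∉ I) (hx : x ∈ I)
    (hy : y ∈ I) (hxy : x ≠ y) (p : G.Walk a x) (hp : ∀ v ∈ p.support, v ∈ I → v = x) :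
    ¬G.Adj a y := by
  intro hay
  obtain ⟨R⟩ := hI.1.2 x hx y hy
  obtain ⟨q, hq⟩ := exists_walk_of_restrict_walk R hx
  have hedge : s(a, y) ∉ (p.append q).edges := by
    rw [Walk.edges_append, List.mem_append, not_or]
    exact ⟨fun he => hxy (hp y (p.snd_mem_support_of_mem_edges he) hy).symm,
      fun he => ha (hq a (q.fst_mem_support_of_mem_edges he))⟩
  obtain ⟨_, c, hc, hac⟩ := adj_and_reachable_delete_edges_iff_exists_cycle.mp
    ⟨hay, reachable_deleteEdges_iff_exists_walk.mpr ⟨p.append q, hedge⟩⟩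
  exact ha (hc.support_subset hI.2 a (c.fst_mem_support_of_mem_edges hac))

/-- `x` is the vertex `x_s` of the paper. -/
def IsAttachment (G : SimpleGraph V) (I : Set V) (s x : V) : Prop :=
  x ∈ I ∧ ∃ p : G.Walk s x, ∀ v ∈ p.support, v ∈ I → v = x

theorem isAttachment_self {x : V} (hx : x ∈ I) : IsAttachment G I x x :=
  ⟨hx, .nil, by simp⟩

theorem IsAttachment.cons {u v x : V} (hu : u ∉ I) (huv : G.Adj u v)
    (hv : IsAttachment G I v x) : IsAttachment G I u x := by
  obtain ⟨hx, p, hp⟩ := hv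
  refine ⟨hx, .cons huv p, fun w hw hwI => ?_⟩
  rcases (Walk.mem_support_iff _).mp hw with rfl | hw
  · exact absurd hwI hu
  · exact hp w hw hwI

theorem exists_isAttachment_of_walk {s z : V} (p : G.Walk s z) (hz : z ∈ I) :
    ∃ x, IsAttachment G I s x := by
  induction p with
  | nil => exact ⟨_, isAttachment_self hz⟩
  | @cons u _ _ h _ ih =>
    by_cases hu : u ∈ I
    · exact ⟨u, isAttachment_self hu⟩
    · obtain ⟨x, hx⟩ := ih hz
      exact ⟨x, hx.cons hu h⟩

theorem IsAttachment.of_mem_support {s x v : V} (hx : x ∈ I) (p : G.Walk s x)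
    (hp : ∀ w ∈ p.support, w ∈ I → w = x) (hv : v ∈ p.support) : IsAttachment G I v x := by
  classical
  exact ⟨hx, p.dropUntil v hv, fun w hw => hp w (p.support_dropUntil_subset_support hv hw)⟩

theorem IsAttachment.eq_of_mem {s x : V} (hsx : IsAttachment G I s x) (hs : s ∈ I) : s = x :=
  let ⟨_, p, hp⟩ := hsx
  hp s p.start_mem_support hs

theorem IsAttachment.eq (hI : IsPreCycleCore G I) {s x y : V} (hsx : IsAttachment G I s x)
    (hsy : IsAttachment G I s y) : x = y := by
  obtain ⟨hy, q, hq⟩ := hsy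
  by_contra hxy
  induction q with
  | nil => exact hxy (hsx.eq_of_mem hy).symm
  | @cons s s' _ h q ih =>
    have hs : s ∉ I := fun hs =>
      hxy ((hsx.eq_of_mem hs).symm.trans (hq s (by simp) hs))
    by_cases hs' : s' ∈ I
    · obtain rfl : s' = _ := hq s' (by simp) hs'
      obtain ⟨hx, p, hp⟩ := hsx
      exact not_adj_of_walk_to_core hI hs hx hy hxy p hp h
    · exact ih (hsx.cons hs' h.symm) hy (fun v hv => hq v (by simp [hv])) hxy

end CoxPerp

open CoxPerp in
/-- decomposition of a connected graph associated to a pre-cycle core. -/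
theorem statement_0 {V : Type*} (G : SimpleGraph V) (I : Set V)
    (hG : G.Connected) (hI : IsPreCycleCore G I) :
    ∃ h : V → V,
      (∀ s, h s ∈ I ∧ ∃ p : G.Walk s (h s), ∀ v ∈ p.support, v ∈ I → v = h s) ∧
      (∀ s, ∀ x ∈ I, (∃ p : G.Walk s x, ∀ v ∈ p.support, v ∈ I → v = x) → x = h s) ∧
      (∀ x ∈ I, ∀ y ∈ I, x ≠ y → Disjoint {s | h s = x} {s | h s = y}) ∧
      (⋃ x ∈ I, {s | h s = x}) = Set.univ ∧
      (∀ x ∈ I, {s | h s = x} ∩ I = {x}) ∧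
      (∀ x ∈ I, ConnectedOn G {s | h s = x} ∧ Acyclic (Restrict G {s | h s = x})) ∧
      (∀ u v, G.Adj u v → (u ∈ I ∧ v ∈ I) ∨ h u = h v) := by
  obtain ⟨z, hz⟩ := hI.1.1
  choose h hh using fun s => exists_isAttachment_of_walk (hG.preconnected s z).some hz
  have huniq : ∀ s x, IsAttachment G I s x → x = h s := fun s x hsx => hsx.eq hI (hh s)
  have hfix : ∀ x ∈ I, h x = x := fun x hx => ((hh x).eq_of_mem hx).symm
  have hfiber : ∀ x ∈ I, {s | h s = x} ∩ I = {x} := fun x hx => by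
    ext s
    exact ⟨fun ⟨hsx, hs⟩ => (hfix s hs).symm.trans hsx, by rintro rfl; exact ⟨hfix s hx, hx⟩⟩
  refine ⟨h, hh, fun s x hx hp => huniq s x ⟨hx, hp⟩,
    fun x _ y _ hxy => Set.disjoint_left.mpr fun s hsx hsy => hxy (hsx.symm.trans hsy),
    Set.eq_univ_of_forall fun s => Set.mem_biUnion (hh s).1 rfl, hfiber,
    fun x hx => ⟨?_, ?_⟩, ?_⟩
  · refine connectedOn_of_forall_walk (hfix x hx) fun u hu => ?_
    obtain rfl : h u = x := hu
    obtain ⟨hxI, p, hp⟩ := hh u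
    exact ⟨p, fun v hv => (huniq v _ (IsAttachment.of_mem_support hxI p hp hv)).symm⟩
  · exact acyclic_restrict_of_subsingleton_inter hI.2 (hfiber x hx ▸ Set.subsingleton_singleton)
  · intro u v huv
    by_cases hu : u ∈ I
    · by_cases hv : v ∈ I
      · exact .inl ⟨hu, hv⟩
      · exact .inr (huniq v (h u) ((hh u).cons hv huv.symm))
    · exact .inr (huniq u (h v) ((hh v).cons hu huv)).symm
end

section
/- Let G be a connected simple graph containing at least one cycle. Then the intersection of any nonempty (possibly infinite) family of pre-cycle cores of G is again a pre-cycle core of G. Consequently, the cycle core of G (the unique minimal pre-cycle core) exists. -/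
/-! Every induced cycle lies in each pre-cycle core, so an intersection of pre-cycle cores
contains a cycle and is nonempty. For connectivity, a pre-cycle core `I` contains every path of
`G` joining two of its vertices: if the path left `I` along an edge `ab` with `a ∈ I`, `b ∉ I`
and came back to `I`, then `b` would reach `a` in `G - ab` (returning through the connected
`G|_I`), and a shortest such detour closed up by `ab` is a chordless cycle through `b ∉ I`.
Hence paths of `G` between points of the intersection stay inside it. The cycle core is the
intersection of all pre-cycle cores, of which the whole vertex set is one. -/

namespace SimpleGraph.Walk

variable {V : Type*} {G : SimpleGraph V}

lemma eq_add_one_of_adj_getVert_of_length_eq_dist {u v : V} {p : G.Walk u v}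
    (hp : p.length = G.dist u v) {i j : ℕ} (hij : i < j) (hj : j ≤ p.length)
    (h : G.Adj (p.getVert i) (p.getVert j)) : j = i + 1 := by
  have := dist_le ((p.take i).append (cons h (p.drop j)))
  simp only [length_append, take_length, length_cons, drop_length] at this
  omega

end SimpleGraph.Walk

namespace CoxPerp

open SimpleGraph Walk

variable {V : Type*} {G : SimpleGraph V}

lemma isInducedCycle_image_Iio {n : ℕ} (g : ℕ → V) (hn : 3 ≤ n)
    (hinj : Set.InjOn g (Set.Iio n)) (hadj : ∀ k < n, G.Adj (g k) (g ((k + 1) % n)))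
    (hchord : ∀ i < n, ∀ j < n, G.Adj (g i) (g j) → j = (i + 1) % n ∨ i = (j + 1) % n) :
    IsInducedCycle G (g '' Set.Iio n) := by
  have : NeZero n := ⟨by omega⟩
  have : Fact (1 < n) := ⟨by omega⟩
  have hsucc : ∀ i : ZMod n, (i + 1).val = (i.val + 1) % n := by
    intro i; rw [ZMod.val_add, ZMod.val_one]
  refine ⟨n, g ∘ ZMod.val, hn, ?_, ?_, fun i => ?_, fun i j h => ?_⟩
  · exact fun i j h => ZMod.val_injective n (hinj i.val_lt j.val_lt h)
  · ext x
    constructor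
    · rintro ⟨i, rfl⟩; exact ⟨i.val, i.val_lt, rfl⟩
    · rintro ⟨k, hk, rfl⟩; exact ⟨k, by simp [ZMod.val_cast_of_lt (Set.mem_Iio.mp hk)]⟩
  · simpa [hsucc] using hadj i.val i.val_lt
  · simpa [← hsucc, ZMod.val_injective n |>.eq_iff] using hchord _ i.val_lt _ j.val_lt h

lemma isInducedCycle_of_adj_of_length_eq_dist {a b : V} (hab : G.Adj a b)
    {p : (G.deleteEdges {s(a, b)}).Walk b a}
    (hp : p.length = (G.deleteEdges {s(a, b)}).dist b a) :
    IsInducedCycle G (p.getVert '' Set.Iio (p.length + 1)) := by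
  have hinj : Set.InjOn p.getVert (Set.Iio (p.length + 1)) := by
    simpa [Set.Iio, Nat.lt_succ_iff] using (p.isPath_of_length_eq_dist hp).getVert_injOn
  have hlen : 2 ≤ p.length := by
    rcases p with _ | ⟨h, q⟩
    · exact absurd rfl hab.ne'
    · rcases q with _ | ⟨_, _⟩
      · simp [deleteEdges_adj, Sym2.eq_swap] at h
      · simp
  have hmod : (p.length + 1) % (p.length + 1) = 0 := Nat.mod_self _
  refine isInducedCycle_image_Iio p.getVert (by omega) hinj (fun k hk => ?_)
    (fun i hi j hj h => ?_)
  · rcases (Nat.lt_succ_iff.mp hk).lt_or_eq with hk | rfl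
    · rw [Nat.mod_eq_of_lt (by omega)]
      exact (p.adj_getVert_succ hk).1
    · simpa [hmod] using hab
  · -- `ab` is the only edge of `G` missing from `G - ab`, and it closes the cycle up.
    by_cases he : s(p.getVert i, p.getVert j) = s(a, b)
    · have h0 : p.getVert 0 = b := p.getVert_zero
      have hl : p.getVert p.length = a := p.getVert_length
      rcases Sym2.eq_iff.mp he with ⟨hi', hj'⟩ | ⟨hi', hj'⟩
      · left
        rw [hinj hi (by simp) (hi'.trans hl.symm), hinj hj (by simp) (hj'.trans h0.symm), hmod]
      · right
        rw [hinj hi (by simp) (hi'.trans h0.symm), hinj hj (by simp) (hj'.trans hl.symm), hmod]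
    · have h' : (G.deleteEdges {s(a, b)}).Adj (p.getVert i) (p.getVert j) := by
        simpa [deleteEdges_adj, he] using h
      rcases lt_trichotomy i j with hij | rfl | hij
      · left
        rw [eq_add_one_of_adj_getVert_of_length_eq_dist hp hij (by omega) h',
          Nat.mod_eq_of_lt (by omega)]
      · exact absurd rfl h.ne
      · right
        rw [eq_add_one_of_adj_getVert_of_length_eq_dist hp hij (by omega) h'.symm,
          Nat.mod_eq_of_lt (by omega)]

lemma IsInducedCycle.nonempty {C : Set V} (hC : IsInducedCycle G C) : C.Nonempty := by
  obtain ⟨n, f, hn, -, rfl, -⟩ := hC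
  have : NeZero n := ⟨by omega⟩
  exact Set.range_nonempty f

lemma reachable_restrict_of_support_subset {I : Set V} {u v : V} (p : G.Walk u v)
    (hp : ∀ y ∈ p.support, y ∈ I) : (Restrict G I).Reachable u v := by
  induction p with
  | nil => rfl
  | cons h q ih =>
    simp only [support_cons, List.mem_cons, forall_eq_or_imp] at hp
    have hadj : (Restrict G I).Adj _ _ := ⟨hp.1, hp.2 _ q.start_mem_support, h⟩
    exact hadj.reachable.trans (ih hp.2)

lemma restrict_le_deleteEdges {I : Set V} {a b : V} (hb : b ∉ I) :
    Restrict G I ≤ G.deleteEdges {s(a, b)} := by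
  rintro x y ⟨hx, hy, h⟩
  refine (deleteEdges_adj ..).mpr ⟨h, fun he => hb ?_⟩
  rcases Sym2.eq_iff.mp he with ⟨-, rfl⟩ | ⟨rfl, -⟩ <;> assumption

lemma not_reachable_deleteEdges_of_adj {I : Set V} (hconn : ConnectedOn G I)
    (hcyc : ∀ C, IsInducedCycle G C → C ⊆ I) {a b c : V} (hab : G.Adj a b) (ha : a ∈ I)
    (hb : b ∉ I) (hc : c ∈ I) : ¬(G.deleteEdges {s(a, b)}).Reachable b c := by
  intro hbc
  have hba := hbc.trans ((hconn.2 c hc a ha).mono (restrict_le_deleteEdges hb))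
  obtain ⟨p, hp⟩ := hba.exists_walk_length_eq_dist
  exact hb <|
    hcyc _ (isInducedCycle_of_adj_of_length_eq_dist hab hp) ⟨0, by simp, p.getVert_zero⟩

lemma IsPreCycleCore.support_subset_of_isPath {I : Set V} (hI : IsPreCycleCore G I)
    {u v : V} {p : G.Walk u v} (hp : p.IsPath) (hu : u ∈ I) (hv : v ∈ I) :
    ∀ y ∈ p.support, y ∈ I := by
  induction p with
  | nil => simpa using hu
  | @cons u w v h q ih =>
    rw [cons_isPath_iff] at hp
    have hw : w ∈ I := by
      by_contra hw
      refine not_reachable_deleteEdges_of_adj hI.1 hI.2 h hu hw hv ?_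
      exact reachable_deleteEdges_iff_exists_walk.mpr
        ⟨q, fun he => hp.2 (q.fst_mem_support_of_mem_edges he)⟩
    simpa [hu] using ih hp.1 hw hv

lemma IsPreCycleCore.sInter (hG : G.Connected) (hcyc : HasCycle G) {𝒮 : Set (Set V)}
    (hcore : ∀ I ∈ 𝒮, IsPreCycleCore G I) : IsPreCycleCore G (⋂₀ 𝒮) := by
  have hsub : ∀ C, IsInducedCycle G C → C ⊆ ⋂₀ 𝒮 :=
    fun C hC => Set.subset_sInter fun I hI => (hcore I hI).2 C hC
  obtain ⟨C, hC⟩ := hcyc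
  obtain ⟨x, hx⟩ := hC.nonempty
  refine ⟨⟨⟨x, hsub C hC hx⟩, fun u hu v hv => ?_⟩, hsub⟩
  obtain ⟨p, hp, -⟩ := hG.exists_path_of_dist u v
  exact reachable_restrict_of_support_subset p fun y hy => Set.mem_sInter.mpr fun I hI =>
    (hcore I hI).support_subset_of_isPath hp (hu I hI) (hv I hI) y hy

lemma isPreCycleCore_univ (hG : G.Connected) : IsPreCycleCore G Set.univ :=
  ⟨⟨hG.nonempty.elim fun x => ⟨x, trivial⟩, fun u _ v _ =>
    reachable_restrict_of_support_subset (hG.preconnected u v).some fun _ _ => trivial⟩,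
    fun C _ => Set.subset_univ C⟩

end CoxPerp

open CoxPerp in
/-- the intersection of a nonempty family of pre-cycle cores is a pre-cycle core;
consequently the cycle core exists. -/
theorem statement_2 {V : Type*} (G : SimpleGraph V)
    (hG : G.Connected) (hcyc : HasCycle G) :
    (∀ 𝒮 : Set (Set V), 𝒮.Nonempty → (∀ I ∈ 𝒮, IsPreCycleCore G I) →
      IsPreCycleCore G (⋂₀ 𝒮)) ∧
    ∃ K, IsCycleCore G K := by
  have hsInter : ∀ 𝒮 : Set (Set V), 𝒮.Nonempty → (∀ I ∈ 𝒮, IsPreCycleCore G I) →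
      IsPreCycleCore G (⋂₀ 𝒮) :=
    fun _ _ hcore => IsPreCycleCore.sInter hG hcyc hcore
  exact ⟨hsInter, ⋂₀ {I | IsPreCycleCore G I},
    hsInter _ ⟨_, isPreCycleCore_univ hG⟩ fun _ hI => hI,
    fun _ hI => Set.sInter_subset_of_mem hI⟩
end

section
/- Let G be a connected simple graph, let I ⊆ V(G) and x ∈ I. If every non-backtracking closed walk in G based at x has all of its vertices in I (equivalently, if the fundamental group of the induced subgraph G|_I at x equals that of G at x), then the connected component of the induced subgraph G|_I containing x contains every cycle of G. -/
/-!
Reach a vertex `c` of the cycle `C` from `x` by a path `q` that meets `C` only at `c`, and let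
`p` be the closed walk once around `C` from `c`. Since a cycle has at least three vertices,
`p` never reverses a step, and since `q` leaves `C` after its last vertex, neither do the joins
of `q · p · q⁻¹`. So this non-backtracking closed walk at `x` stays in `I`, and its initial
segments up to the vertices of `C` are walks in `G|_I`.
-/

open SimpleGraph

namespace CoxPerp

variable {V : Type*} {G : SimpleGraph V}

lemma isNonBacktracking_iff {u v : V} (p : G.Walk u v) :
    IsNonBacktracking p ↔ p.darts.IsChain fun d d' => d'.snd ≠ d.fst :=
  Iff.rfl

lemma isNonBacktracking_of_isPath {u v : V} {p : G.Walk u v} (hp : p.IsPath) :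
    IsNonBacktracking p := by
  induction p with
  | nil => exact List.isChain_nil
  | cons h q ih =>
    rw [Walk.cons_isPath_iff] at hp
    rw [isNonBacktracking_iff, Walk.darts_cons]
    refine List.isChain_cons.2 ⟨fun d hd hback => hp.2 ?_, ih hp.1⟩
    have := q.dart_snd_mem_support_of_mem_darts (List.mem_of_mem_head? hd)
    rwa [hback] at this

lemma IsNonBacktracking.append {u v w : V} {p : G.Walk u v} {q : G.Walk v w}
    (hp : IsNonBacktracking p) (hq : IsNonBacktracking q)
    (hpq : ∀ d ∈ p.darts.getLast?, ∀ d' ∈ q.darts.head?, d'.snd ≠ d.fst) :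
    IsNonBacktracking (p.append q) := by
  rw [isNonBacktracking_iff, Walk.darts_append]
  exact List.IsChain.append hp hq hpq

lemma head_darts_snd_ne_getLast_darts_fst {u v w : V} {p : G.Walk u v} {q : G.Walk v w}
    (hpq : ∀ y ∈ p.support, y ∈ q.support → y = v)
    {d d' : G.Dart} (hd : d ∈ p.darts.getLast?) (hd' : d' ∈ q.darts.head?) :
    d'.snd ≠ d.fst := by
  obtain ⟨hne, rfl⟩ := List.mem_getLast?_eq_getLast hd
  have hfst := p.dart_fst_mem_support_of_mem_darts (List.getLast_mem hne)
  have hsnd : (p.darts.getLast hne).snd = v := by rw [Walk.getLast_darts_eq_lastDart]; rfl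
  cases q with
  | nil => simp at hd'
  | cons hadj q =>
    rw [Walk.darts_cons, List.head?_cons, Option.mem_some_iff] at hd'
    subst hd'
    intro h
    exact (p.darts.getLast hne).fst_ne_snd (by rw [hsnd]; exact hpq _ hfst (by rw [← h]; simp))

lemma isNonBacktracking_append_append_reverse {x c : V} {q : G.Walk x c} (hq : q.IsPath)
    {p : G.Walk c c} (hp : IsNonBacktracking p) (hp_nil : ¬p.Nil)
    (hqp : ∀ y ∈ q.support, y ∈ p.support → y = c) :
    IsNonBacktracking ((q.append p).append q.reverse) := by
  refine (IsNonBacktracking.append (isNonBacktracking_of_isPath hq) hp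
    fun d hd d' hd' => head_darts_snd_ne_getLast_darts_fst hqp hd hd').append
    (isNonBacktracking_of_isPath hq.reverse) fun d hd d' hd' => ?_
  rw [Walk.darts_append, List.getLast?_append_of_ne_nil _ (Walk.darts_eq_nil.not.2 hp_nil)] at hd
  refine head_darts_snd_ne_getLast_darts_fst (fun y hyp hyq => ?_) hd hd'
  rw [Walk.support_reverse, List.mem_reverse] at hyq
  exact hqp y hyq hyp

lemma exists_isPath_to_set (C : Set V) {x b : V} (p : G.Walk x b) (hb : b ∈ C) :
    ∃ c ∈ C, ∃ q : G.Walk x c, q.IsPath ∧ ∀ y ∈ q.support, y ∈ C → y = c := by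
  classical
  induction p with
  | nil => exact ⟨_, hb, Walk.nil, Walk.IsPath.nil, by simp⟩
  | @cons a y b h p ih =>
    by_cases ha : a ∈ C
    · exact ⟨a, ha, Walk.nil, Walk.IsPath.nil, by simp⟩
    obtain ⟨c, hc, q, -, hqC⟩ := ih hb
    refine ⟨c, hc, (Walk.cons h q).toPath, (Walk.cons h q).toPath.2, fun v hv hvC => ?_⟩
    rcases List.mem_cons.1 ((Walk.cons h q).support_toPath_subset_support hv) with rfl | hv
    · exact absurd hvC ha
    · exact hqC v hv hvC

section seqWalk

variable (u : ℕ → V) (hu : ∀ k, G.Adj (u k) (u (k + 1)))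

def seqWalk : (k : ℕ) → G.Walk (u 0) (u k)
  | 0 => .nil
  | k + 1 => (seqWalk k).concat (hu k)

lemma support_seqWalk (k : ℕ) : (seqWalk u hu k).support = (List.range (k + 1)).map u := by
  induction k with
  | zero => rfl
  | succ k ih =>
    rw [seqWalk, Walk.support_concat, ih, List.range_succ (n := k + 1), List.map_append]
    rfl

lemma darts_seqWalk (k : ℕ) :
    (seqWalk u hu k).darts = (List.range k).map fun j => ⟨(u j, u (j + 1)), hu j⟩ := by
  induction k with
  | zero => rfl
  | succ k ih =>
    rw [seqWalk, Walk.darts_concat, ih, List.range_succ, List.map_append, List.concat_eq_append]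
    rfl

lemma isNonBacktracking_seqWalk (h : ∀ j, u (j + 2) ≠ u j) (k : ℕ) :
    IsNonBacktracking (seqWalk u hu k) := by
  rw [isNonBacktracking_iff, darts_seqWalk, List.isChain_map, List.isChain_range]
  exact fun j _ => h j

end seqWalk

lemma IsInducedCycle.exists_closed_walk {C : Set V} (hC : IsInducedCycle G C) {c : V}
    (hc : c ∈ C) :
    ∃ p : G.Walk c c, IsNonBacktracking p ∧ ¬p.Nil ∧ ∀ v, v ∈ p.support ↔ v ∈ C := by
  obtain ⟨n, f, hn, hf, rfl, hadj, -⟩ := hC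
  obtain ⟨k, rfl⟩ := hc
  let u : ℕ → V := fun j => f (k + j)
  have hu : ∀ j, G.Adj (u j) (u (j + 1)) := fun j => by simpa [u, add_assoc] using hadj (k + j)
  have hu0 : u 0 = f k := by simp [u]
  have hun : u n = f k := by simp [u]
  have hback : ∀ j, u (j + 2) ≠ u j := fun j heq => by
    have h2 : ((2 : ℕ) : ZMod n) = 0 := by simpa [u, add_assoc] using hf heq
    have := Nat.le_of_dvd two_pos ((ZMod.natCast_eq_zero_iff 2 n).1 h2)
    omega
  refine ⟨(seqWalk u hu n).copy hu0 hun, ?_, ?_, fun v => ?_⟩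
  · rw [isNonBacktracking_iff, Walk.darts_copy]
    exact isNonBacktracking_seqWalk u hu hback n
  · rw [← Walk.darts_eq_nil, Walk.darts_copy, darts_seqWalk]
    simp only [List.map_eq_nil_iff, List.range_eq_nil]
    omega
  · have : NeZero n := ⟨by omega⟩
    rw [Walk.support_copy, support_seqWalk]
    simp only [List.mem_map, List.mem_range, Set.mem_range]
    constructor
    · rintro ⟨j, -, rfl⟩
      exact ⟨_, rfl⟩
    · rintro ⟨i, rfl⟩
      exact ⟨(i - k).val, by linarith [(i - k).val_lt], by simp [u]⟩

lemma reachable_restrict_of_mem_support {I : Set V} {u w v : V} (p : G.Walk u w)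
    (hp : ∀ y ∈ p.support, y ∈ I) (hv : v ∈ p.support) : (Restrict G I).Reachable u v := by
  induction p with
  | nil => exact List.mem_singleton.1 hv ▸ Reachable.refl _
  | @cons a b _ h p ih =>
    have hab : (Restrict G I).Adj a b := ⟨hp a (by simp), hp b (by simp), h⟩
    rcases List.mem_cons.1 hv with rfl | hv
    · rfl
    · exact hab.reachable.trans (ih (fun y hy => hp y (List.mem_cons_of_mem _ hy)) hv)

end CoxPerp

open CoxPerp in
theorem statement_3_general {V : Type*} (G : SimpleGraph V) (hG : G.Connected)
    (I : Set V) (x : V)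
    (h : ∀ w : G.Walk x x, IsNonBacktracking w → ∀ v ∈ w.support, v ∈ I) :
    ∀ C, IsInducedCycle G C → ∀ v ∈ C, (Restrict G I).Reachable x v := by
  intro C hC v hv
  obtain ⟨c, hc, q, hq, hqC⟩ := exists_isPath_to_set C (hG.preconnected x v).some hv
  obtain ⟨p, hp, hp_nil, hpC⟩ := hC.exists_closed_walk hc
  let w := (q.append p).append q.reverse
  have hw : IsNonBacktracking w := isNonBacktracking_append_append_reverse hq hp hp_nil
    fun y hyq hyp => hqC y hyq ((hpC y).1 hyp)
  have hvw : v ∈ w.support := by simp [w, Walk.mem_support_append_iff, hpC, hv]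
  exact reachable_restrict_of_mem_support w (h w hw) hvw

open CoxPerp in
/-- if every non-backtracking closed walk at `x` stays in `I`, then the component
of `G|_I` containing `x` contains every cycle of `G`. -/
theorem statement_3 {V : Type*} (G : SimpleGraph V) (hG : G.Connected)
    (I : Set V) (x : V) (hx : x ∈ I)
    (h : ∀ w : G.Walk x x, IsNonBacktracking w → ∀ v ∈ w.support, v ∈ I) :
    ∀ C, IsInducedCycle G C → ∀ v ∈ C, (Restrict G I).Reachable x v :=
  statement_3_general G hG I x h
end

section
/- Let (W,S) be a Coxeter system, x ∈ S, O = S_{∼x}^{odd}, and E = {s ∈ S∖O : m(y,s) < ∞ for some y ∈ O}. If W^{⊥x} is finitely generated, then E is finite. -/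
/-!
A finite generating set of `W^{⊥x}` involves only finitely many simple reflections, say those in
`F`, so `W^{⊥x} ≤ W_F`. Let `s ∈ E`, with `y ∈ O` and `m(y,s)` finite; it is even since `s ∉ O`,
say `2k`. The central element `z = (s_s s_y)^k` of the dihedral group `⟨s_s, s_y⟩` makes `z s_y` a
reflection other than `s_y` commuting with `s_y`. Since `s_x` and `s_y` are conjugate by some
`w ∈ W_O`, the reflection `w⁻¹ (z s_y) w` lies in `W^{⊥x} ≤ W_F`. If `s ∉ F`, then `z` lies in
`W_{S ∖ {s}}`, which fixes the `α_s`-coordinate in the geometric representation, whereas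
`z α_s = -α_s`. Hence `E ⊆ F`.
-/

open Real Polynomial Polynomial.Chebyshev Finsupp

lemma Real.sin_pi_div_natCast_pos {m : ℕ} (hm : 2 ≤ m) : 0 < sin (π / m) := by
  have : (1 : ℝ) < m := by exact_mod_cast hm
  exact sin_pos_of_pos_of_lt_pi (by positivity) (div_lt_self pi_pos this)

lemma Polynomial.Chebyshev.eval_U_cos_pi_div {m : ℕ} (hm : 2 ≤ m) {n : ℤ} {r : ℝ}
    (h : sin ((n + 1) * (π / m)) = r * sin (π / m)) : (U ℝ n).eval (cos (π / m)) = r :=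
  mul_right_cancel₀ (sin_pi_div_natCast_pos hm).ne' (by rw [U_real_cos, h])

lemma Polynomial.Chebyshev.dvd_of_eval_U_cos_pi_div {m d : ℕ} (hm : 2 ≤ m)
    (h1 : (U ℝ (2 * d)).eval (cos (π / m)) = 1) (h0 : (U ℝ (2 * d - 1)).eval (cos (π / m)) = 0) :
    m ∣ d := by
  have hsin0 : sin (2 * d * (π / m)) = 0 := by
    simpa [h0] using (U_real_cos (π / m) (2 * d - 1)).symm
  have hsin1 : sin (2 * d * (π / m) + π / m) = sin (π / m) := by
    simpa [h1, add_mul] using (U_real_cos (π / m) (2 * d)).symm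
  have hcos : cos (2 * d * (π / m)) = 1 := by
    rw [sin_add, hsin0, zero_mul, zero_add] at hsin1
    exact (mul_eq_right₀ (sin_pi_div_natCast_pos hm).ne').mp hsin1
  obtain ⟨n, hn⟩ := (cos_eq_one_iff _).mp hcos
  have hm0 : (m : ℝ) ≠ 0 := by positivity
  have hnd : (n * m : ℤ) = d := by
    have : (n : ℝ) * m = d := by field_simp at hn; linarith
    exact_mod_cast this
  exact Int.natCast_dvd_natCast.mp ⟨n, by rw [← hnd, mul_comm]⟩

lemma Polynomial.Chebyshev.eval_U_add_one {R : Type*} [CommRing R] (x : R) (k : ℤ) :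
    (U R (k + 1)).eval x = 2 * x * (U R k).eval x - (U R (k - 1)).eval x := by
  simp [U_add_one]

namespace CoxeterMatrix

variable {B : Type*} (M : CoxeterMatrix B)

/-- For `M i j = 0`, i.e. `m(i, j) = ∞`, the junk value `π / 0 = 0` gives `cos 0 = 1`, which is
exactly the value the geometric representation needs. -/
noncomputable def cosAngle (i j : B) : ℝ := cos (π / M i j)

lemma cosAngle_symm (i j : B) : M.cosAngle i j = M.cosAngle j i := by
  rw [cosAngle, cosAngle, M.symmetric]

@[simp] lemma cosAngle_self (i : B) : M.cosAngle i i = -1 := by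
  simp [cosAngle]

/-- The linear form `2 B(α_i, ·)`, for the standard bilinear form
`B(α_i, α_j) = -cos (π / M i j)`. -/
noncomputable def coroot (i : B) : (B →₀ ℝ) →ₗ[ℝ] ℝ :=
  linearCombination ℝ fun j => -2 * M.cosAngle i j

lemma coroot_single (i j : B) : M.coroot i (single j 1) = -2 * M.cosAngle i j := by
  simp [coroot]

lemma coroot_single_self (i : B) : M.coroot i (single i 1) = 2 := by
  simp [coroot_single]

noncomputable def geomRefl (i : B) : (B →₀ ℝ) ≃ₗ[ℝ] (B →₀ ℝ) :=
  Module.reflection (M.coroot_single_self i)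

lemma geomRefl_apply (i : B) (v : B →₀ ℝ) : M.geomRefl i v = v - M.coroot i v • single i 1 :=
  Module.reflection_apply v _

lemma geomRefl_single (i j : B) :
    M.geomRefl i (single j 1) = single j 1 + (2 * M.cosAngle i j) • single i 1 := by
  rw [geomRefl_apply, coroot_single]; module

lemma geomRefl_apply_of_ne {i b : B} (h : b ≠ i) (v : B →₀ ℝ) : M.geomRefl i v b = v b := by
  simp [geomRefl_apply, single_eq_of_ne h]

lemma geomRefl_mul_self (i : B) : M.geomRefl i * M.geomRefl i = 1 :=
  LinearEquiv.ext (Module.involutive_reflection (M.coroot_single_self i))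

lemma geomRefl_mul_geomRefl_pow_single (i j : B) (n : ℕ) :
    ((M.geomRefl i * M.geomRefl j) ^ n) (single i 1) =
      (U ℝ (2 * n)).eval (M.cosAngle i j) • single i 1 +
        (U ℝ (2 * n - 1)).eval (M.cosAngle i j) • single j 1 := by
  induction n with
  | zero => simp
  | succ n ih =>
    rw [pow_succ', LinearEquiv.mul_apply, ih]
    simp only [map_add, map_smul, LinearEquiv.mul_apply, geomRefl_single, cosAngle_self,
      M.cosAngle_symm j i]
    push_cast
    rw [show (2 : ℤ) * (n + 1) = 2 * n + 1 + 1 by ring,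
      show (2 : ℤ) * n + 1 + 1 - 1 = 2 * n + 1 by ring, eval_U_add_one, eval_U_add_one,
      add_sub_cancel_right]
    module

lemma geomRefl_inv (i : B) : (M.geomRefl i)⁻¹ = M.geomRefl i := rfl

lemma geomRefl_mul_geomRefl_pow_single_self {i j : B} (hm : 2 ≤ M i j) :
    ((M.geomRefl i * M.geomRefl j) ^ M i j) (single i 1) = single i 1 := by
  have hm0 : (M i j : ℝ) ≠ 0 := by positivity
  have h1 : (U ℝ (2 * M i j)).eval (M.cosAngle i j) = 1 := eval_U_cos_pi_div hm <| by
    rw [show ((2 * (M i j : ℤ) : ℤ) + 1 : ℝ) * (π / M i j) = π / M i j + (1 : ℕ) * (2 * π) by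
      push_cast; field_simp; ring, sin_add_nat_mul_two_pi, one_mul]
  have h0 : (U ℝ (2 * M i j - 1)).eval (M.cosAngle i j) = 0 := eval_U_cos_pi_div hm <| by
    rw [show ((2 * (M i j : ℤ) - 1 : ℤ) + 1 : ℝ) * (π / M i j) = (2 : ℕ) * π by
      push_cast; field_simp; ring, sin_nat_mul_pi, zero_mul]
  rw [geomRefl_mul_geomRefl_pow_single, h1, h0]
  module

lemma geomRefl_mul_geomRefl_pow_of_coroot_eq_zero {i j : B} {u : B →₀ ℝ}
    (hi : M.coroot i u = 0) (hj : M.coroot j u = 0) (n : ℕ) :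
    ((M.geomRefl i * M.geomRefl j) ^ n) u = u := by
  induction n with
  | zero => rfl
  | succ n ih => simp [pow_succ', ih, geomRefl_apply, hi, hj]

lemma geomRefl_mul_geomRefl_pow_eq_one (i j : B) :
    (M.geomRefl i * M.geomRefl j) ^ M i j = 1 := by
  rcases eq_or_ne i j with rfl | hij
  · rw [M.diagonal, pow_one, geomRefl_mul_self]
  rcases Nat.eq_zero_or_pos (M i j) with h0 | hpos
  · rw [h0, pow_zero]
  have hm : 2 ≤ M i j := by have := M.off_diagonal i j hij; omega
  set R := (M.geomRefl i * M.geomRefl j) ^ M i j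
  have hRi : R (single i 1) = single i 1 := M.geomRefl_mul_geomRefl_pow_single_self hm
  have hRj : R (single j 1) = single j 1 := by
    have hRinv : R⁻¹ = (M.geomRefl j * M.geomRefl i) ^ M j i := by
      rw [← inv_pow, mul_inv_rev, geomRefl_inv, geomRefl_inv, M.symmetric]
    have h := M.geomRefl_mul_geomRefl_pow_single_self (M.symmetric i j ▸ hm)
    rw [← hRinv] at h
    simpa using congrArg R h.symm
  -- the Gram matrix of `α_i, α_j` has determinant `4 sin² (π / M i j) ≠ 0`, so every `v` splits
  -- off a vector fixed by both reflections
  have hc : 1 - M.cosAngle i j ^ 2 ≠ 0 := by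
    rw [cosAngle, ← sin_sq]; exact pow_ne_zero 2 (sin_pi_div_natCast_pos hm).ne'
  refine LinearEquiv.ext fun v => ?_
  set a := (M.coroot i v + M.cosAngle i j * M.coroot j v) / (2 * (1 - M.cosAngle i j ^ 2))
  set b := (M.coroot j v + M.cosAngle i j * M.coroot i v) / (2 * (1 - M.cosAngle i j ^ 2))
  have hv : v = (v - a • single i 1 - b • single j 1) + a • single i 1 + b • single j 1 := by abel
  have hu : R (v - a • single i 1 - b • single j 1) = v - a • single i 1 - b • single j 1 := by
    apply geomRefl_mul_geomRefl_pow_of_coroot_eq_zero <;>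
    · simp only [map_sub, map_smul, coroot_single, cosAngle_self, M.cosAngle_symm j i, smul_eq_mul,
        a, b]
      field_simp
      ring
  rw [hv, map_add, map_add, map_smul, map_smul, hu, hRi, hRj]
  rfl

lemma geomRefl_mul_geomRefl_pow_single_of_eq_two_mul {i j : B} {k : ℕ} (hk : M i j = 2 * k)
    (hk0 : k ≠ 0) :
    ((M.geomRefl i * M.geomRefl j) ^ k) (single i 1) = -single i 1 := by
  have hm : 2 ≤ M i j := by omega
  have hk' : (k : ℝ) ≠ 0 := by exact_mod_cast hk0
  have hM : (M i j : ℝ) = 2 * k := by exact_mod_cast hk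
  have h1 : (U ℝ (2 * k)).eval (M.cosAngle i j) = -1 := eval_U_cos_pi_div hm <| by
    rw [show ((2 * (k : ℤ) : ℤ) + 1 : ℝ) * (π / M i j) = π / M i j + π by
      rw [hM]; push_cast; field_simp; ring, sin_add_pi, neg_one_mul]
  have h0 : (U ℝ (2 * k - 1)).eval (M.cosAngle i j) = 0 := eval_U_cos_pi_div hm <| by
    rw [show ((2 * (k : ℤ) - 1 : ℤ) + 1 : ℝ) * (π / M i j) = π by
      rw [hM]; push_cast; field_simp; ring, sin_pi, zero_mul]
  rw [geomRefl_mul_geomRefl_pow_single, h1, h0]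
  module

end CoxeterMatrix

namespace CoxeterSystem

variable {B W : Type*} [Group W] {M : CoxeterMatrix B} (cs : CoxeterSystem M W)

local prefix:100 "s" => cs.simple

noncomputable def geomRep : W →* ((B →₀ ℝ) ≃ₗ[ℝ] (B →₀ ℝ)) :=
  cs.lift ⟨M.geomRefl, M.geomRefl_mul_geomRefl_pow_eq_one⟩

@[simp] lemma geomRep_simple (i : B) : cs.geomRep (s i) = M.geomRefl i :=
  cs.lift_apply_simple _ i

lemma geomRep_apply_of_mem_closure {A : Set B} {g : W} (hg : g ∈ Subgroup.closure (cs.simple '' A))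
    {b : B} (hb : b ∉ A) (v : B →₀ ℝ) : cs.geomRep g v b = v b := by
  induction hg using Subgroup.closure_induction generalizing v with
  | mem _ hz =>
    obtain ⟨a, ha, rfl⟩ := hz
    rw [geomRep_simple]
    exact M.geomRefl_apply_of_ne (ne_of_mem_of_not_mem ha hb).symm v
  | one => rw [map_one]; rfl
  | mul _ _ _ _ ih ih' => rw [map_mul, LinearEquiv.mul_apply, ih, ih']
  | inv z _ ih =>
    rw [map_inv]
    simpa using (ih ((cs.geomRep z)⁻¹ v)).symm

theorem orderOf_simple_mul_simple (i j : B) : orderOf (s i * s j) = M i j := by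
  rcases eq_or_ne i j with rfl | hij
  · rw [cs.simple_mul_simple_self, orderOf_one, M.diagonal]
  set d := orderOf (s i * s j)
  have hR : ((M.geomRefl i * M.geomRefl j) ^ d) (single i 1) = single i 1 := by
    rw [← cs.geomRep_simple, ← cs.geomRep_simple, ← map_mul, ← map_pow, pow_orderOf_eq_one, map_one]
    rfl
  rw [M.geomRefl_mul_geomRefl_pow_single] at hR
  have h1 : (U ℝ (2 * d)).eval (M.cosAngle i j) = 1 := by
    simpa [single_apply, hij] using congrArg (· i) hR
  have h0 : (U ℝ (2 * d - 1)).eval (M.cosAngle i j) = 0 := by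
    simpa [single_apply, hij] using congrArg (· j) hR
  refine Nat.dvd_antisymm (orderOf_dvd_of_pow_eq_one (cs.simple_mul_simple_pow i j)) ?_
  rcases Nat.eq_zero_or_pos (M i j) with h | hpos
  · rw [CoxeterMatrix.cosAngle, h, Nat.cast_zero, div_zero, cos_zero, U_eval_one] at h0
    rw [h, show d = 0 by push_cast at h0; exact_mod_cast (by linarith : (d : ℝ) = 0)]
  · exact dvd_of_eval_U_cos_pi_div (by have := M.off_diagonal i j hij; omega) h1 h0

lemma simple_mul_inv_pow (i j : B) (n : ℕ) : s i * ((s i * s j) ^ n)⁻¹ = (s i * s j) ^ n * s i := by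
  rw [← inv_pow, mul_inv_rev, cs.inv_simple, cs.inv_simple]
  exact (SemiconjBy.pow_right (mul_assoc _ _ _).symm n).eq

lemma isReflection_pow_mul_simple (i j : B) (n : ℕ) : cs.IsReflection ((s i * s j) ^ n * s j) := by
  induction n using Nat.twoStepInduction with
  | zero => simpa using cs.isReflection_simple j
  | one => simpa [mul_assoc] using cs.isReflection_simple i
  | more n ih _ =>
    convert ih.conj (s i * s j) using 1
    rw [mul_inv_rev, cs.inv_simple, cs.inv_simple, pow_succ _ (n + 1), pow_succ' _ n]
    simp only [mul_assoc, cs.simple_mul_simple_cancel_left, cs.simple_mul_simple_self, mul_one]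

lemma conj_simple_eq_of_pow_eq_one {i j : B} {q : ℕ} (h : (s i * s j) ^ (2 * q + 1) = 1) :
    (s i * s j) ^ q * s i * ((s i * s j) ^ q)⁻¹ = s j := by
  have hinv : (s i * s j) ^ (2 * q) = (s i * s j)⁻¹ :=
    eq_inv_of_mul_eq_one_left (by rwa [← pow_succ])
  rw [mul_assoc, simple_mul_inv_pow, ← mul_assoc, ← pow_add, ← two_mul, hinv, mul_inv_rev,
    cs.inv_simple, cs.inv_simple, mul_assoc, cs.simple_mul_simple_self, mul_one]

lemma commute_pow_simple_of_eq_two_mul {i j : B} {k : ℕ} (hk : M i j = 2 * k) :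
    Commute ((s i * s j) ^ k) (s j) := by
  have hinv : ((s i * s j) ^ k)⁻¹ = (s i * s j) ^ k :=
    inv_eq_of_mul_eq_one_left (by rw [← pow_add, ← two_mul, ← hk, cs.simple_mul_simple_pow])
  have h := cs.simple_mul_inv_pow j i k
  rw [show s j * s i = (s i * s j)⁻¹ by rw [mul_inv_rev, cs.inv_simple, cs.inv_simple], inv_pow,
    inv_inv, hinv] at h
  exact h.symm

end CoxeterSystem

namespace CoxPerp

variable {B W : Type*} [Group W] {M : CoxeterMatrix B} (cs : CoxeterSystem M W)

lemma m_eq (i j : B) : m cs i j = M i j := cs.orderOf_simple_mul_simple i j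

lemma parabolic_mono {A A' : Set B} (h : A ⊆ A') : parabolic cs A ≤ parabolic cs A' :=
  Subgroup.closure_mono (Set.image_mono h)

lemma parabolic_univ : parabolic cs Set.univ = ⊤ := by
  rw [parabolic, Set.image_univ, cs.subgroup_closure_range_simple]

lemma wordProd_mem_parabolic (ω : List B) : cs.wordProd ω ∈ parabolic cs {b | b ∈ ω} := by
  induction ω with
  | nil => exact one_mem _
  | cons a ω ih =>
    rw [cs.wordProd_cons]
    exact mul_mem (Subgroup.subset_closure ⟨a, List.mem_cons_self, rfl⟩)
      (parabolic_mono cs (fun b hb => List.mem_cons_of_mem a hb) ih)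

lemma exists_finite_le_parabolic_of_fg {H : Subgroup W} (hH : H.FG) :
    ∃ F : Set B, F.Finite ∧ H ≤ parabolic cs F := by
  classical
  obtain ⟨T, rfl⟩ := hH
  choose ω hω using cs.wordProd_surjective
  refine ⟨⋃ g ∈ T, {b | b ∈ ω g}, T.finite_toSet.biUnion fun g _ => (ω g).finite_toSet, ?_⟩
  refine (Subgroup.closure_le _).mpr fun g hg => ?_
  rw [← hω g]
  exact parabolic_mono cs (Set.subset_biUnion_of_mem (u := fun g => {b | b ∈ ω g}) hg)
    (wordProd_mem_parabolic cs (ω g))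

lemma exists_conj_eq_simple_of_reachable {I : Set B} {x y : B}
    (hy : (oddGraph cs I).Reachable x y) :
    ∃ w ∈ parabolic cs (oddComponent cs I x), w * cs.simple x * w⁻¹ = cs.simple y := by
  rw [SimpleGraph.reachable_iff_reflTransGen] at hy
  induction hy with
  | refl => exact ⟨1, one_mem _, by simp⟩
  | @tail b c hxb hbc ih =>
    obtain ⟨w, hw, hwx⟩ := ih
    obtain ⟨q, hq⟩ := hbc.2.2.2
    have hmem : ∀ {a}, Relation.ReflTransGen (oddGraph cs I).Adj x a →
        cs.simple a ∈ parabolic cs (oddComponent cs I x) := fun h =>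
      Subgroup.subset_closure ⟨_, (SimpleGraph.reachable_iff_reflTransGen _ _).mpr h, rfl⟩
    refine ⟨(cs.simple b * cs.simple c) ^ q * w,
      mul_mem (pow_mem (mul_mem (hmem hxb) (hmem (hxb.tail hbc))) q) hw, ?_⟩
    calc (cs.simple b * cs.simple c) ^ q * w * cs.simple x * ((cs.simple b * cs.simple c) ^ q * w)⁻¹
        = (cs.simple b * cs.simple c) ^ q * (w * cs.simple x * w⁻¹) *
            ((cs.simple b * cs.simple c) ^ q)⁻¹ := by group
      _ = cs.simple c := by
        rw [hwx]; exact cs.conj_simple_eq_of_pow_eq_one (hq ▸ pow_orderOf_eq_one _)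

lemma conj_mem_perp {x y : B} {w t : W} (hw : w * cs.simple x * w⁻¹ = cs.simple y)
    (ht : cs.IsReflection t) (hcomm : Commute t (cs.simple y)) (hne : t ≠ cs.simple y) :
    w⁻¹ * t * w ∈ perp cs Set.univ x := by
  have hx : cs.simple x = w⁻¹ * cs.simple y * w := by rw [← hw]; group
  refine Subgroup.subset_closure ⟨?_, ?_, ?_⟩
  · obtain ⟨u, i, hu⟩ := ht.conj w⁻¹
    exact ⟨u, parabolic_univ cs ▸ Subgroup.mem_top u, i, trivial, by rwa [inv_inv] at hu⟩
  · rw [hx]; intro h; exact hne (by simpa using h)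
  · calc w⁻¹ * t * w * cs.simple x = w⁻¹ * (t * cs.simple y) * w := by rw [hx]; group
      _ = w⁻¹ * (cs.simple y * t) * w := by rw [hcomm.eq]
      _ = cs.simple x * (w⁻¹ * t * w) := by rw [hx]; group

lemma mem_of_perp_le_parabolic {x y s : B} {F : Set B} (hF : perp cs Set.univ x ≤ parabolic cs F)
    (hy : y ∈ oddComponent cs Set.univ x) (hs : s ∉ oddComponent cs Set.univ x) (hys : M y s ≠ 0) :
    s ∈ F := by
  by_contra hsF
  have hne : y ≠ s := fun h => hs (h ▸ hy)
  obtain ⟨k, hk⟩ : Even (M s y) := by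
    rw [← Nat.not_odd_iff_even, ← m_eq cs]
    exact fun hodd => hs (hy.trans (SimpleGraph.Adj.reachable
      ⟨hne, trivial, trivial, m_symm cs s y ▸ hodd⟩))
  rw [← two_mul] at hk
  have hk0 : k ≠ 0 := by rintro rfl; exact hys (M.symmetric y s ▸ hk)
  obtain ⟨w, hwO, hwx⟩ := exists_conj_eq_simple_of_reachable cs hy
  set z := (cs.simple s * cs.simple y) ^ k
  have hz : Commute z (cs.simple y) := cs.commute_pow_simple_of_eq_two_mul hk
  have hz1 : z ≠ 1 := pow_ne_one_of_lt_orderOf hk0 (by rw [cs.orderOf_simple_mul_simple]; omega)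
  have hρ := hF (conj_mem_perp cs hwx (cs.isReflection_pow_mul_simple s y k)
    (hz.mul_left (Commute.refl _)) (fun h => hz1 (mul_eq_right.mp h)))
  have hle : ∀ {A : Set B}, s ∉ A → parabolic cs A ≤ parabolic cs {s}ᶜ :=
    fun h => parabolic_mono cs fun _ hb => ne_of_mem_of_not_mem hb h
  have hzP : z ∈ parabolic cs {s}ᶜ := by
    have hy' : cs.simple y ∈ parabolic cs (oddComponent cs Set.univ x) :=
      Subgroup.subset_closure ⟨y, hy, rfl⟩
    rw [← cs.simple_mul_simple_cancel_right (w := z) y,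
      show z * cs.simple y = w * (w⁻¹ * (z * cs.simple y) * w) * w⁻¹ by group]
    exact mul_mem (mul_mem (mul_mem (hle hs hwO) (hle hsF hρ)) (inv_mem (hle hs hwO))) (hle hs hy')
  have h := cs.geomRep_apply_of_mem_closure hzP (Set.notMem_compl_iff.mpr rfl) (single s 1)
  rw [map_pow, map_mul, cs.geomRep_simple, cs.geomRep_simple,
    M.geomRefl_mul_geomRefl_pow_single_of_eq_two_mul hk hk0] at h
  norm_num at h

end CoxPerp

open CoxPerp in
/-- if `W^{⊥x}` is finitely generated then the set `E` is finite. -/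
theorem statement_10 {B W : Type*} [Group W] {M : CoxeterMatrix B}
    (cs : CoxeterSystem M W) (x : B) (O E : Set B)
    (hO : O = oddComponent cs Set.univ x)
    (hE : E = {s | s ∉ O ∧ ∃ y ∈ O, m cs y s ≠ 0})
    (hfg : (perp cs Set.univ x).FG) :
    E.Finite := by
  subst hO hE
  obtain ⟨F, hFfin, hF⟩ := exists_finite_le_parabolic_of_fg cs hfg
  exact hFfin.subset fun s ⟨hsO, y, hyO, hys⟩ =>
    mem_of_perp_le_parabolic cs hF hyO hsO (m_eq cs y s ▸ hys)
end

section
/- Let (W,S) be a Coxeter system, x ∈ I ⊆ S, and y ∈ I_{∼x}^{odd}. Then there exists w ∈ W_I such that w x w^{-1} = y and w W_I^{⊥x} w^{-1} = W_I^{⊥y}; in particular, W_I^{⊥x} is finitely generated if and only if W_I^{⊥y} is finitely generated. -/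
/-! If `m(s, t) = 2k + 1`, then `(st)^k` conjugates `s` to `t`, so along a path of `Γ_I^odd`
from `x` to `y` these elements of `W_I` compose to some `w` with `w x w⁻¹ = y`. Conjugation by
`w ∈ W_I` permutes the reflections of `W_I`, hence carries the generators of `W_I^{⊥x}` onto
those of `W_I^{⊥y}`. -/

lemma Subgroup.FG.map {G G' : Type*} [Group G] [Group G'] {P : Subgroup G} (hP : P.FG)
    (f : G →* G') : (P.map f).FG := by
  classical
  obtain ⟨S, rfl⟩ := hP
  exact ⟨S.image f, by rw [MonoidHom.map_closure, Finset.coe_image]⟩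

lemma pow_mul_conj_eq_of_orderOf_eq_odd {G : Type*} [Group G] {a b : G} (ha : a⁻¹ = a)
    (hb : b⁻¹ = b) {k : ℕ} (hk : orderOf (a * b) = 2 * k + 1) :
    (a * b) ^ k * a * ((a * b) ^ k)⁻¹ = b := by
  have hba : b * a = (a * b)⁻¹ := by rw [mul_inv_rev, ha, hb]
  have hsemiconj : a * (b * a) ^ k = (a * b) ^ k * a :=
    (SemiconjBy.pow_right (mul_assoc a b a).symm k).eq
  have hpow : (a * b) ^ (2 * k) = (a * b)⁻¹ := by
    rw [eq_inv_iff_mul_eq_one, ← pow_succ, ← hk, pow_orderOf_eq_one]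
  calc (a * b) ^ k * a * ((a * b) ^ k)⁻¹ = a * ((a * b) ^ (2 * k))⁻¹ := by
        rw [← hsemiconj, hba, inv_pow, two_mul, pow_add, mul_inv_rev]; group
    _ = b := by rw [hpow, inv_inv]; nth_rw 1 [← ha]; exact inv_mul_cancel_left a b

namespace CoxPerp

variable {B W : Type*} [Group W] {M : CoxeterMatrix B} (cs : CoxeterSystem M W) {I : Set B}

lemma simple_mem_parabolic {s : B} (hs : s ∈ I) : cs.simple s ∈ parabolic cs I :=
  Subgroup.subset_closure ⟨s, hs, rfl⟩

lemma exists_conj_simple_of_adj {s t : B} (h : (oddGraph cs I).Adj s t) :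
    ∃ w ∈ parabolic cs I, w * cs.simple s * w⁻¹ = cs.simple t := by
  obtain ⟨-, hs, ht, k, hk⟩ := h
  exact ⟨(cs.simple s * cs.simple t) ^ k,
    pow_mem (mul_mem (simple_mem_parabolic cs hs) (simple_mem_parabolic cs ht)) k,
    pow_mul_conj_eq_of_orderOf_eq_odd (cs.inv_simple s) (cs.inv_simple t) hk⟩

lemma exists_conj_simple_of_mem_oddComponent {x y : B} (hy : y ∈ oddComponent cs I x) :
    ∃ w ∈ parabolic cs I, w * cs.simple x * w⁻¹ = cs.simple y := by
  obtain ⟨p⟩ := hy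
  induction p with
  | nil => exact ⟨1, one_mem _, by group⟩
  | cons hadj _ ih =>
    obtain ⟨w, hw, hconj⟩ := ih
    obtain ⟨v, hv, hadj_conj⟩ := exists_conj_simple_of_adj cs hadj
    exact ⟨w * v, mul_mem hw hv, by rw [← hconj, ← hadj_conj]; group⟩

lemma IsReflectionOf.conj {w r : W} (hw : w ∈ parabolic cs I) (hr : IsReflectionOf cs I r) :
    IsReflectionOf cs I (w * r * w⁻¹) := by
  obtain ⟨u, hu, s, hs, rfl⟩ := hr
  exact ⟨w * u, mul_mem hw hu, s, hs, by group⟩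

lemma isReflectionOf_conj_iff {w r : W} (hw : w ∈ parabolic cs I) :
    IsReflectionOf cs I (w * r * w⁻¹) ↔ IsReflectionOf cs I r := by
  refine ⟨fun h => ?_, IsReflectionOf.conj cs hw⟩
  simpa [mul_assoc] using IsReflectionOf.conj cs (inv_mem hw) h

lemma conj_mem_perp_generators_iff {x y : B} {w r : W} (hw : w ∈ parabolic cs I)
    (hxy : w * cs.simple x * w⁻¹ = cs.simple y) :
    (IsReflectionOf cs I (w * r * w⁻¹) ∧ w * r * w⁻¹ ≠ cs.simple y ∧
        w * r * w⁻¹ * cs.simple y = cs.simple y * (w * r * w⁻¹)) ↔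
      (IsReflectionOf cs I r ∧ r ≠ cs.simple x ∧ r * cs.simple x = cs.simple x * r) := by
  have hinj : Function.Injective (MulAut.conj w) := (MulAut.conj w).injective
  rw [← hxy, isReflectionOf_conj_iff cs hw]
  exact and_congr_right' (and_congr hinj.ne_iff (commute_map_iff hinj))

lemma perp_map_conj {x y : B} {w : W} (hw : w ∈ parabolic cs I)
    (hxy : w * cs.simple x * w⁻¹ = cs.simple y) :
    (perp cs I x).map (MulAut.conj w).toMonoidHom = perp cs I y := by
  rw [perp, perp, MonoidHom.map_closure]
  congr 1
  ext r
  constructor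
  · rintro ⟨r, hr, rfl⟩
    exact (conj_mem_perp_generators_iff cs hw hxy).2 hr
  · intro hr
    refine ⟨w⁻¹ * r * w, (conj_mem_perp_generators_iff cs hw hxy).1 ?_, by simp [mul_assoc]⟩
    simpa only [mul_assoc, mul_inv_cancel_left, mul_inv_cancel, mul_one] using Set.mem_ofPred.1 hr

end CoxPerp

open CoxPerp in
theorem statement_19_general {B W : Type*} [Group W] {M : CoxeterMatrix B}
    (cs : CoxeterSystem M W) (x : B) (I : Set B)
    (y : B) (hy : y ∈ oddComponent cs I x) :
    ∃ w ∈ parabolic cs I, w * cs.simple x * w⁻¹ = cs.simple y ∧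
      (perp cs I x).map (MulAut.conj w).toMonoidHom = perp cs I y ∧
      ((perp cs I x).FG ↔ (perp cs I y).FG) := by
  obtain ⟨w, hw, hxy⟩ := exists_conj_simple_of_mem_oddComponent cs hy
  have hyx : w⁻¹ * cs.simple y * w⁻¹⁻¹ = cs.simple x := by rw [← hxy]; group
  refine ⟨w, hw, hxy, perp_map_conj cs hw hxy, fun hfg => ?_, fun hfg => ?_⟩
  · exact perp_map_conj cs hw hxy ▸ hfg.map _
  · exact perp_map_conj cs (inv_mem hw) hyx ▸ hfg.map _

open CoxPerp in
/-- generators in the same odd component give conjugate perpendicular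
subgroups. -/
theorem statement_19 {B W : Type*} [Group W] {M : CoxeterMatrix B}
    (cs : CoxeterSystem M W) (x : B) (I : Set B) (hx : x ∈ I)
    (y : B) (hy : y ∈ oddComponent cs I x) :
    ∃ w ∈ parabolic cs I, w * cs.simple x * w⁻¹ = cs.simple y ∧
      (perp cs I x).map (MulAut.conj w).toMonoidHom = perp cs I y ∧
      ((perp cs I x).FG ↔ (perp cs I y).FG) :=
  statement_19_general cs x I y hy
end
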